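/- Let (X,d,m) be a parabolic RCD(0,N) space and C ⊂ X × (0,+∞) a nonempty closed set which is locally the boundary of a locally perimeter minimizing set in X × ℝ; let d_C be the distance from C, d_0 the signed distance from X × {0} (positive on X × (−∞,0)), and d̄ := d_C − d_0 on X × (−∞,0). Let x̄ = (x, t_x) ∈ X × (−∞,0) and let γ : [0, d_C(x̄)] → X × ℝ be a connector for x̄ with endpoint γ(d_C(x̄)) = (y, t_y), and set s(x̄,γ) := 1 − |t_x − t_y| / d_C(x̄). Then the pointwise Lipschitz constant satisfies lip(d̄)(x̄) ≥ s(x̄,γ). -/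

import Mathlib

/-!
Common framework: metric measure spaces, relaxed gradients, BV/perimeter,
Cheeger energy, Sobolev spaces, Laplacians, heat kernels, parabolicity,
a synthetic `RCD(K,N)` predicate, Green's functions, and the `L²` product
`X ×₂ ℝ` used for half-space statements.
-/

open MeasureTheory Filter Topology Set Metric
open scoped ENNReal NNReal

noncomputable section

namespace HalfSpaceRCD

variable {X : Type*}

/-- Pointwise (upper) Lipschitz constant `lip f x` of a real valued function. -/
def lipConst [PseudoMetricSpace X] (f : X → ℝ) (x : X) : ℝ≥0∞ :=
  Filter.limsup (fun y => ENNReal.ofReal (|f x - f y| / dist x y)) (𝓝[≠] x)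

/-- A function is locally Lipschitz on a set `A`. -/
def LocLipOn [PseudoMetricSpace X] (f : X → ℝ) (A : Set X) : Prop :=
  ∀ x ∈ A, ∃ ε : ℝ, 0 < ε ∧ ∃ K : ℝ≥0, LipschitzOnWith K f (Metric.ball x ε ∩ A)

/-- Lipschitz functions with compact support contained in `A`
(the class `Lip_c(A)`). -/
def LipCompactIn [PseudoMetricSpace X] (f : X → ℝ) (A : Set X) : Prop :=
  (∃ K : ℝ≥0, LipschitzWith K f) ∧ HasCompactSupport f ∧ tsupport f ⊆ A

variable [MetricSpace X] [MeasurableSpace X]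

/-- Relaxed total variation `|Df|(A)` of `f : X → ℝ` on a set `A`, obtained by
relaxation of `∫_A lip g dμ` along locally Lipschitz approximations `g → f` in `L¹(A)`. -/
def variationOn (μ : Measure X) (f : X → ℝ) (A : Set X) : ℝ≥0∞ :=
  sInf { v : ℝ≥0∞ | ∃ g : ℕ → X → ℝ, (∀ n, LocLipOn (g n) A) ∧
    Tendsto (fun n => ∫⁻ x in A, ENNReal.ofReal |g n x - f x| ∂μ) atTop (𝓝 0) ∧
    v = Filter.liminf (fun n => ∫⁻ x in A, lipConst (g n) x ∂μ) atTop }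

/-- Relaxed `2`-Cheeger energy of `f` on a set `A`. -/
def cheegerOn (μ : Measure X) (f : X → ℝ) (A : Set X) : ℝ≥0∞ :=
  sInf { v : ℝ≥0∞ | ∃ g : ℕ → X → ℝ, (∀ n, LocLipOn (g n) A) ∧
    Tendsto (fun n => ∫⁻ x in A, (ENNReal.ofReal |g n x - f x|) ^ 2 ∂μ) atTop (𝓝 0) ∧
    v = Filter.liminf (fun n => ∫⁻ x in A, (lipConst (g n) x) ^ 2 ∂μ) atTop }

/-- Membership in the Sobolev space `W^{1,2}(A)`. -/
def MemW12 (μ : Measure X) (f : X → ℝ) (A : Set X) : Prop :=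
  MemLp f 2 (μ.restrict A) ∧ cheegerOn μ f A < ⊤

/-- Membership in `W^{1,2}_0(A)`: approximable by `Lip_c(A)` functions in energy. -/
def MemW120 (μ : Measure X) (f : X → ℝ) (A : Set X) : Prop :=
  MemW12 μ f A ∧ ∃ g : ℕ → X → ℝ, (∀ n, LipCompactIn (g n) A) ∧
    Tendsto (fun n => ∫⁻ x in A, (ENNReal.ofReal |g n x - f x|) ^ 2 ∂μ) atTop (𝓝 0) ∧
    Tendsto (fun n => cheegerOn μ (fun x => g n x - f x) A) atTop (𝓝 0)

/-- Membership in `W^{1,1}(A)`: integrable, of bounded variation, and the variation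
measure is absolutely continuous w.r.t. `μ` (it has an integrable density). -/
def MemW11 (μ : Measure X) (f : X → ℝ) (A : Set X) : Prop :=
  IntegrableOn f A μ ∧ ∃ G : X → ℝ, (∀ x, 0 ≤ G x) ∧ IntegrableOn G A μ ∧
    ∀ U : Set X, U ⊆ A → IsOpen U → variationOn μ f U = ∫⁻ x in U, ENNReal.ofReal (G x) ∂μ

/-- Membership in `W^{1,1}_0(A)`. -/
def MemW110 (μ : Measure X) (f : X → ℝ) (A : Set X) : Prop :=
  MemW11 μ f A ∧ ∃ g : ℕ → X → ℝ, (∀ n, LipCompactIn (g n) A) ∧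
    Tendsto (fun n => ∫⁻ x in A, ENNReal.ofReal |g n x - f x| ∂μ) atTop (𝓝 0) ∧
    Tendsto (fun n => variationOn μ (fun x => g n x - f x) A) atTop (𝓝 0)

/-- Membership in `W^{1,1}_loc(X)`. -/
def MemW11Loc (μ : Measure X) (f : X → ℝ) : Prop :=
  ∀ (x : X) (r : ℝ), 0 < r → MemW11 μ f (Metric.ball x r)

/-- The pointwise pairing `∇f ⋅ ∇g` defined by polarization of slopes. -/
def gradPairing (f g : X → ℝ) (x : X) : ℝ :=
  ((lipConst (fun y => f y + g y) x).toReal ^ 2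
    - (lipConst (fun y => f y - g y) x).toReal ^ 2) / 4

/-- `f ∈ D(Δ, B)` with `Δ f = h` on `B`. -/
def HasLaplacianOn (μ : Measure X) (f h : X → ℝ) (B : Set X) : Prop :=
  MemW12 μ f B ∧ MemLp h 2 (μ.restrict B) ∧
    ∀ g : X → ℝ, MemW120 μ g B →
      ∫ y in B, g y * h y ∂μ = -∫ y in B, gradPairing g f y ∂μ

/-! ## The synthetic `RCD(K,N)` condition -/

/-- The coefficient `s_{K,N}(t)` of the model space. -/
def modelCoeff (K N t : ℝ) : ℝ :=
  if 0 < K then Real.sqrt ((N - 1) / K) * Real.sin (t * Real.sqrt (K / (N - 1)))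
  else if K = 0 then t
  else Real.sqrt ((N - 1) / (-K)) * Real.sinh (t * Real.sqrt ((-K) / (N - 1)))

/-- The model volume `V_{K,N}(r)` (up to the constant `N ω_N`). -/
def modelVolume (K N r : ℝ) : ℝ := ∫ t in (0:ℝ)..r, modelCoeff K N t ^ (N - 1)

/-- Synthetic encoding of the `RCD(K,N)` condition on a metric measure space:
a complete, proper, geodesic metric measure space with measure finite on bounded
sets and of full support, which is infinitesimally Hilbertian (the `2`-Cheeger
energy satisfies the parallelogram identity) and satisfies the sharp
Bishop–Gromov volume comparison of the curvature-dimension condition `CD(K,N)`. -/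
structure IsRCD (K N : ℝ) {X : Type*} [MetricSpace X] [MeasurableSpace X]
    (μ : Measure X) : Prop where
  one_le_dim : 1 ≤ N
  complete : CompleteSpace X
  proper : ProperSpace X
  geodesic : ∀ x y : X, ∃ z : X, dist x z = dist x y / 2 ∧ dist z y = dist x y / 2
  finiteOnBounded : ∀ (x : X) (r : ℝ), μ (Metric.ball x r) < ⊤
  fullSupport : ∀ (x : X) (r : ℝ), 0 < r → 0 < μ (Metric.ball x r)
  infHilbertian : ∀ f g : X → ℝ, MemLp f 2 μ → MemLp g 2 μ →
    cheegerOn μ (fun x => f x + g x) Set.univ + cheegerOn μ (fun x => f x - g x) Set.univ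
      = 2 * cheegerOn μ f Set.univ + 2 * cheegerOn μ g Set.univ
  bishopGromov : ∀ (x : X) (r R : ℝ), 0 < r → r ≤ R →
    μ (Metric.ball x R) * ENNReal.ofReal (modelVolume K N r)
      ≤ μ (Metric.ball x r) * ENNReal.ofReal (modelVolume K N R)

/-! ## Heat kernel and parabolicity -/

/-- `p` is the heat kernel of the metric measure space `(X, d, μ)`: a symmetric,
measurable, stochastically complete kernel satisfying the Chapman–Kolmogorov
identity, whose associated semigroup `P_t f(x) = ∫ p_t(x,y) f(y) dμ(y)` is the
`L²`-gradient flow of the Cheeger energy. -/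
structure IsHeatKernel {X : Type*} [MetricSpace X] [MeasurableSpace X] (μ : Measure X)
    (p : ℝ → X → X → ℝ) : Prop where
  nonneg : ∀ t x y, 0 < t → 0 ≤ p t x y
  symm : ∀ t x y, p t x y = p t y x
  meas : ∀ t : ℝ, Measurable fun q : X × X => p t q.1 q.2
  timeCont : ∀ x y, ContinuousOn (fun t => p t x y) (Set.Ioi (0:ℝ))
  chapman : ∀ s t : ℝ, 0 < s → 0 < t → ∀ x y, p (s + t) x y = ∫ z, p s x z * p t z y ∂μ
  stochasticallyComplete : ∀ t : ℝ, 0 < t → ∀ x, ∫ y, p t x y ∂μ = 1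
  l2Approx : ∀ f : X → ℝ, LipCompactIn f Set.univ →
    Tendsto (fun t : ℝ => ∫ x, ((∫ y, p t x y * f y ∂μ) - f x) ^ 2 ∂μ) (𝓝[>] (0:ℝ)) (𝓝 0)
  gradientFlow : ∀ f g : X → ℝ, LipCompactIn f Set.univ → LipCompactIn g Set.univ →
    ∀ t : ℝ, 0 < t →
      HasDerivAt (fun s : ℝ => ∫ x, (∫ y, p s x y * f y ∂μ) * g x ∂μ)
        (-(((cheegerOn μ (fun x => (∫ y, p t x y * f y ∂μ) + g x) Set.univ).toReal -
            (cheegerOn μ (fun x => (∫ y, p t x y * f y ∂μ) - g x) Set.univ).toReal) / 4)) t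

/-- A metric measure space with heat kernel `p` is parabolic if
`∫_1^∞ p_t(x,y) dt = +∞` for every pair of points. -/
def Parabolic {X : Type*} [MetricSpace X] [MeasurableSpace X] (μ : Measure X)
    (p : ℝ → X → X → ℝ) : Prop :=
  ∀ x y : X, ∫⁻ t in Set.Ioi (1:ℝ), ENNReal.ofReal (p t x y) = ⊤

/-! ## Sets of finite perimeter and minimizers -/

/-- Perimeter of `E` relative to `A`, i.e. the total variation of `1_E` on `A`. -/
def perimeter (μ : Measure X) (E A : Set X) : ℝ≥0∞ :=
  variationOn μ (Set.indicator E fun _ => (1:ℝ)) A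

/-- `s` is compactly contained in `t` (`s ⋐ t`). -/
def CompactlyContained [TopologicalSpace X] (s t : Set X) : Prop :=
  IsCompact (closure s) ∧ closure s ⊆ t

/-- The symmetric difference of two sets. -/
def symmDiffSet (E F : Set X) : Set X := (E \ F) ∪ (F \ E)

/-- `E` is perimeter minimizing in the open set `Ω`. -/
def PerimMinimizingIn (μ : Measure X) (E Ω : Set X) : Prop :=
  E ⊆ Ω ∧ (∀ x ∈ Ω, ∀ r : ℝ, 0 < r → perimeter μ E (Metric.ball x r ∩ Ω) < ⊤) ∧
    ∀ x ∈ Ω, ∀ r : ℝ, 0 < r → ∀ F : Set X, F ⊆ Ω →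
      CompactlyContained (symmDiffSet F E) (Metric.ball x r ∩ Ω) →
      perimeter μ E (Metric.ball x r ∩ Ω) ≤ perimeter μ F (Metric.ball x r ∩ Ω)

/-- `E` is (globally) perimeter minimizing. -/
def PerimMinimizing (μ : Measure X) (E : Set X) : Prop :=
  PerimMinimizingIn μ E Set.univ

/-- `E` is locally perimeter minimizing in the open set `Ω`. -/
def LocPerimMinimizingIn (μ : Measure X) (E Ω : Set X) : Prop :=
  E ⊆ Ω ∧ (∀ x ∈ Ω, ∀ r : ℝ, 0 < r → perimeter μ E (Metric.ball x r ∩ Ω) < ⊤) ∧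
    ∀ x ∈ Ω, ∃ r : ℝ, 0 < r ∧ ∀ F : Set X, F ⊆ Ω →
      CompactlyContained (symmDiffSet F E) (Metric.ball x r ∩ Ω) →
      perimeter μ E (Metric.ball x r ∩ Ω) ≤ perimeter μ F (Metric.ball x r ∩ Ω)

/-- `C` is locally the boundary of a locally perimeter minimizing set: every point has
an open neighbourhood `U` and a set `E ⊆ U` (open representative) locally minimizing
the perimeter in `U` with `C ∩ U = ∂E ∩ U`. -/
def IsLocalMinimizingBoundary (μ : Measure X) (C : Set X) : Prop :=
  ∀ x : X, ∃ U : Set X, IsOpen U ∧ x ∈ U ∧ ∃ E : Set X, E ⊆ U ∧ IsOpen E ∧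
    LocPerimMinimizingIn μ E U ∧ C ∩ U = frontier E ∩ U

/-- `S` is an area minimizing boundary in the open set `A`. -/
def IsAreaMinBoundary (μ : Measure X) (S A : Set X) : Prop :=
  ∃ E : Set X, E ⊆ A ∧ PerimMinimizingIn μ E A ∧ frontier E ∩ A = S

/-! ## Regular sets and Green's functions -/

/-- An open precompact set `B` with `closure B ≠ X` is regular if the Dirichlet
problem for harmonic functions with continuous boundary data is solvable on `B`. -/
def IsRegularSet (μ : Measure X) (B : Set X) : Prop :=
  IsOpen B ∧ IsCompact (closure B) ∧ closure B ≠ Set.univ ∧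
    ∀ f : X → ℝ, MemW12 μ f B → ContinuousOn f (frontier B) →
      ∃ u : X → ℝ, HasLaplacianOn μ u (fun _ => 0) B ∧ ContinuousOn u (closure B) ∧
        MemW120 μ (fun y => u y - f y) B ∧ Set.EqOn u f (frontier B)

/-- An exhaustion of `X` by regular sets. -/
def IsRegularExhaustion (μ : Measure X) (B : ℕ → Set X) : Prop :=
  (∀ i, IsRegularSet μ (B i)) ∧ (∀ i, CompactlyContained (B i) (B (i + 1))) ∧
    (⋃ i, B i) = Set.univ

/-- `G` is a Green's function on the regular set `B` with pole `x`:
`G ∈ W^{1,1}_0(B) ∩ C(closure B \ {x})`, `Δ G = -δ_x` in the distributional sense in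
`B`, and `G = 0` on `∂B`. -/
structure IsGreenOn (μ : Measure X) (B : Set X) (x : X) (G : X → ℝ) : Prop where
  mem : MemW110 μ G B
  cont : ContinuousOn G (closure B \ {x})
  deltaEq : ∀ g : X → ℝ, LipCompactIn g B → ∫ z in B, gradPairing g G z ∂μ = g x
  bdry : Set.EqOn G 0 (frontier B)

/-- `G` is a Green's function on `X` with pole `x`:
`G ∈ W^{1,1}_loc(X) ∩ C(X \ {x})` and `Δ G = -δ_x` in the distributional sense. -/
structure IsGreenGlobal (μ : Measure X) (x : X) (G : X → ℝ) : Prop where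
  mem : MemW11Loc μ G
  cont : ContinuousOn G {x}ᶜ
  deltaEq : ∀ g : X → ℝ, LipCompactIn g Set.univ → ∫ z, gradPairing g G z ∂μ = g x

/-! ## The `L²` product of two metric measure spaces -/

instance l2ProdMeasurableSpace {α β : Type*} [MeasurableSpace α] [MeasurableSpace β] :
    MeasurableSpace (WithLp 2 (α × β)) :=
  MeasurableSpace.comap (WithLp.ofLp (p := 2)) (inferInstanceAs (MeasurableSpace (α × β)))

/-- The product measure on the `L²` product. -/
def l2prodMeasure {α β : Type*} [MeasurableSpace α] [MeasurableSpace β]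
    (μ : Measure α) (ν : Measure β) : Measure (WithLp 2 (α × β)) :=
  Measure.map (WithLp.toLp 2) (μ.prod ν : Measure (α × β))

/-- First coordinate of a point of the `L²` product. -/
def fst2 {α β : Type*} (q : WithLp 2 (α × β)) : α := (WithLp.equiv 2 (α × β) q).1

/-- Second coordinate of a point of the `L²` product. -/
def snd2 {α β : Type*} (q : WithLp 2 (α × β)) : β := (WithLp.equiv 2 (α × β) q).2

/-- The point `(a, b)` of the `L²` product. -/
def mk2 {α β : Type*} (a : α) (b : β) : WithLp 2 (α × β) :=
  (WithLp.equiv 2 (α × β)).symm (a, b)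

instance l2ProdBorelSpace {α β : Type*} [MetricSpace α] [MetricSpace β]
    [MeasurableSpace α] [MeasurableSpace β] [BorelSpace α] [BorelSpace β]
    [SecondCountableTopology α] [SecondCountableTopology β] :
    BorelSpace (WithLp 2 (α × β)) :=
  ⟨(WithLp.borelSpace 2 α β).measurable_eq⟩

/-! ## Weighted Riemannian manifolds, minimality, moduli of parabolicity -/

/-- Weighted area functional: the `d`-dimensional Hausdorff measure weighted by `w`. -/
def wArea {P : Type*} [MetricSpace P] [MeasurableSpace P] [BorelSpace P]
    (d : ℝ) (w : P → ℝ) (A : Set P) : ℝ≥0∞ :=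
  ∫⁻ x in A, ENNReal.ofReal (w x) ∂(μH[d])

/-- Synthetic encoding of an `n`-dimensional weighted Riemannian manifold
`(M, d_g, e^{-V} m_g)` with boundary `Bd`: the measure is the `n`-dimensional
Hausdorff measure with the continuous weight `e^{-V}`, the distance is geodesic,
and around any point the space is `(1+δ)`-bi-Lipschitz to a subset of `ℝⁿ`
at every scale `δ`. -/
structure IsWeightedManifoldMM (n : ℕ) (M : Type*) [MetricSpace M] [MeasurableSpace M]
    [BorelSpace M] (ν : Measure M) (V : M → ℝ) (Bd : Set M) : Prop where
  weightCont : Continuous V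
  measure_eq : ν = (μH[(n : ℝ)] : Measure M).withDensity fun x => ENNReal.ofReal (Real.exp (-V x))
  bd_closed : IsClosed Bd
  geodesic : ∀ x y : M, ∃ z : M, dist x z = dist x y / 2 ∧ dist z y = dist x y / 2
  charts : ∀ x : M, ∀ δ : ℝ, 0 < δ → ∃ ε : ℝ, 0 < ε ∧ ∃ f : M → EuclideanSpace ℝ (Fin n),
    (∀ y ∈ Metric.ball x ε, ∀ z ∈ Metric.ball x ε,
      dist y z / (1 + δ) ≤ dist (f y) (f z) ∧ dist (f y) (f z) ≤ (1 + δ) * dist y z) ∧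
    (x ∉ Bd → Metric.ball x ε ∩ Bd = ∅)

/-- A hypersurface `S` is minimal with free boundary on `Bd` (equivalently, it is a
critical point of the `d`-dimensional weighted area functional with weight `w`
among deformations preserving `Bd`): for every compactly supported bi-Lipschitz
deformation family `Φ_t` with `Φ_0 = id` preserving `Bd`, the weighted area of
`Φ_t '' S` has vanishing derivative at `t = 0`. -/
def IsMinimalFreeBoundary {P : Type*} [MetricSpace P] [MeasurableSpace P] [BorelSpace P]
    (d : ℝ) (w : P → ℝ) (Bd : Set P) (S : Set P) : Prop :=
  ∀ (Φ : ℝ → P → P) (Kc : Set P), IsCompact Kc →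
    Φ 0 = id →
    (∀ (t : ℝ) (y : P), y ∉ Kc → Φ t y = y) →
    (∀ t : ℝ, Function.Bijective (Φ t)) →
    (∃ L : ℝ≥0, ∀ t ∈ Set.Icc (-1:ℝ) 1, LipschitzWith L (Φ t)) →
    (∃ L : ℝ≥0, ∀ y : P, LipschitzWith L fun t => Φ t y) →
    (∀ t : ℝ, Φ t '' Bd ⊆ Bd) →
    deriv (fun t : ℝ => (wArea d w (Φ t '' S ∩ Kc)).toReal) 0 = 0

/-- `P` is a modulus of parabolicity. -/
def ModulusOfParabolicity (P : ℝ → ℝ) : Prop :=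
  (∀ t : ℝ, 0 ≤ t → 0 < P t) ∧ ∫⁻ t in Set.Ioi (1:ℝ), ENNReal.ofReal (t / P t) = ⊤

/-- The oscillation `Osc_{x,r}(S)` of a set `S ⊆ M ×₂ ℝ` through `(x,0)`. -/
def Osc {M : Type*} [MetricSpace M] (x : M) (r : ℝ) (S : Set (WithLp 2 (M × ℝ))) : ℝ :=
  sSup { a : ℝ | ∃ q ∈ S, fst2 q ∈ Metric.ball x r ∧ snd2 q ∈ Set.Ioo (-r) r ∧ a = |snd2 q| }

/-- Upper oscillation `Osc⁺_{x,r}(S)`. -/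
def OscPlus {M : Type*} [MetricSpace M] (x : M) (r : ℝ) (S : Set (WithLp 2 (M × ℝ))) : ℝ :=
  sSup { a : ℝ | ∃ q ∈ S, fst2 q ∈ Metric.ball x r ∧ snd2 q ∈ Set.Ioo 0 r ∧ a = |snd2 q| }

/-!
Along the connector `d_C(γ t) = L - t`, so the difference quotient of `d̄` at `γ 0 = x̄`
towards `γ t` is `|t + (t_x - t_{γ t})| / t ≥ 1 - |t_x - t_{γ t}| / t`. In the `L²` product
the `ℝ`-component of a geodesic moves at constant speed (equality case of Minkowski's
inequality), so `|t_x - t_{γ t}| / t = |t_x - t_y| / L` for every `t ∈ (0, L)`; letting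
`t → 0` bounds `lip d̄ (x̄)`.
-/

lemma prod_dist_sq_eq_of_L2 {α β : Type*} [PseudoMetricSpace α] [PseudoMetricSpace β]
    (x y : WithLp 2 (α × β)) :
    dist x y ^ 2 = dist x.fst y.fst ^ 2 + dist x.snd y.snd ^ 2 := by
  rw [WithLp.prod_dist_eq_add (by norm_num), ← Real.rpow_natCast, ← Real.rpow_mul (by positivity)]
  norm_num

/-- Equality case of Minkowski's inequality in the plane: `(a₁, b₁)` and `(a₂, b₂)` have lengths
`h` and `k`, and their sum dominates `(a, b)`, of length `h + k`. -/
lemma snd_mul_eq_of_minkowski_eq {a₁ b₁ a₂ b₂ a b h k : ℝ}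
    (ha₁ : 0 ≤ a₁) (hb₁ : 0 ≤ b₁) (ha₂ : 0 ≤ a₂) (hb₂ : 0 ≤ b₂) (ha : 0 ≤ a) (hb : 0 ≤ b)
    (hh : 0 ≤ h) (hk : 0 ≤ k)
    (e₁ : a₁ ^ 2 + b₁ ^ 2 = h ^ 2) (e₂ : a₂ ^ 2 + b₂ ^ 2 = k ^ 2) (e : a ^ 2 + b ^ 2 = (h + k) ^ 2)
    (ta : a ≤ a₁ + a₂) (tb : b ≤ b₁ + b₂) :
    b₁ * (h + k) = b * h := by
  have inner_ge : h * k ≤ a₁ * a₂ + b₁ * b₂ := by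
    nlinarith [mul_le_mul ta ta ha (by linarith), mul_le_mul tb tb hb (by linarith)]
  have parallel_a : k * a₁ = h * a₂ := by
    nlinarith [sq_nonneg (k * a₁ - h * a₂), sq_nonneg (k * b₁ - h * b₂), mul_nonneg hh hk]
  have parallel_b : k * b₁ = h * b₂ := by
    nlinarith [sq_nonneg (k * a₁ - h * a₂), sq_nonneg (k * b₁ - h * b₂), mul_nonneg hh hk]
  have la : h * a ≤ (h + k) * a₁ := by linarith [mul_le_mul_of_nonneg_left ta hh]
  have lb : h * b ≤ (h + k) * b₁ := by linarith [mul_le_mul_of_nonneg_left tb hh]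
  have same_length : (h * a) ^ 2 + (h * b) ^ 2 = ((h + k) * a₁) ^ 2 + ((h + k) * b₁) ^ 2 := by
    linear_combination h ^ 2 * e - (h + k) ^ 2 * e₁
  have sq_a := pow_le_pow_left₀ (by positivity) la 2
  have sq_b := pow_le_pow_left₀ (by positivity) lb 2
  have hb_eq := (pow_left_inj₀ (by positivity) (by positivity) two_ne_zero).mp
    (show (h * b) ^ 2 = ((h + k) * b₁) ^ 2 by linarith)
  linarith

lemma dist_snd_mul_eq_of_dist_add_dist_eq {α β : Type*} [PseudoMetricSpace α]
    [PseudoMetricSpace β] {x y z : WithLp 2 (α × β)} (hz : dist x z + dist z y = dist x y) :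
    dist x.snd z.snd * dist x y = dist x.snd y.snd * dist x z := by
  rw [← hz]
  refine snd_mul_eq_of_minkowski_eq dist_nonneg dist_nonneg dist_nonneg dist_nonneg dist_nonneg
    dist_nonneg dist_nonneg dist_nonneg (prod_dist_sq_eq_of_L2 x z).symm
    (prod_dist_sq_eq_of_L2 z y).symm ?_ (dist_triangle _ _ _) (dist_triangle _ _ _)
  rw [hz, prod_dist_sq_eq_of_L2]

section UnitSpeedSegment

variable {P : Type*} [PseudoMetricSpace P]

def IsUnitSpeedSegment (γ : ℝ → P) (L : ℝ) : Prop :=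
  ∀ s ∈ Icc 0 L, ∀ t ∈ Icc 0 L, dist (γ s) (γ t) = |s - t|

namespace IsUnitSpeedSegment

variable {γ : ℝ → P} {L t : ℝ}

lemma dist_apply_zero (hγ : IsUnitSpeedSegment γ L) (ht : t ∈ Icc 0 L) :
    dist (γ 0) (γ t) = t := by
  rw [hγ 0 ⟨le_rfl, ht.1.trans ht.2⟩ t ht, zero_sub, abs_neg, abs_of_nonneg ht.1]

lemma dist_add_dist_eq (hγ : IsUnitSpeedSegment γ L) (ht : t ∈ Icc 0 L) :
    dist (γ 0) (γ t) + dist (γ t) (γ L) = dist (γ 0) (γ L) := by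
  have hL : L ∈ Icc 0 L := ⟨ht.1.trans ht.2, le_rfl⟩
  rw [hγ.dist_apply_zero ht, hγ.dist_apply_zero hL, hγ t ht L hL, abs_sub_comm,
    abs_of_nonneg (sub_nonneg.mpr ht.2)]
  ring

lemma infDist_eq_sub {C : Set P} (hγ : IsUnitSpeedSegment γ L) (hL : infDist (γ 0) C = L)
    (hγL : γ L ∈ C) (ht : t ∈ Icc 0 L) : infDist (γ t) C = L - t := by
  have hsplit := hγ.dist_add_dist_eq ht
  rw [hγ.dist_apply_zero ht, hγ.dist_apply_zero ⟨ht.1.trans ht.2, le_rfl⟩] at hsplit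
  refine le_antisymm ?_ ?_
  · linarith [infDist_le_dist_of_mem (x := γ t) hγL]
  · linarith [infDist_le_infDist_add_dist (x := γ 0) (y := γ t) (s := C), hγ.dist_apply_zero ht]

lemma tendsto_nhdsNE (hγ : IsUnitSpeedSegment γ L) (hL : 0 < L) :
    Tendsto γ (𝓝[>] 0) (𝓝[≠] (γ 0)) := by
  have hdist : ∀ᶠ t in 𝓝[>] (0 : ℝ), dist (γ t) (γ 0) = t := by
    filter_upwards [Ioo_mem_nhdsGT hL] with t ht
    rw [dist_comm, hγ.dist_apply_zero (Ioo_subset_Icc_self ht)]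
  refine tendsto_nhdsWithin_iff.mpr ⟨tendsto_iff_dist_tendsto_zero.mpr ?_, ?_⟩
  · exact (tendsto_congr' hdist).mpr (tendsto_nhdsWithin_of_tendsto_nhds tendsto_id)
  · filter_upwards [hdist, self_mem_nhdsWithin] with t ht (htpos : 0 < t) hγt
    rw [hγt, dist_self] at ht
    exact htpos.ne ht

end IsUnitSpeedSegment

lemma ofReal_le_lipConst_of_isUnitSpeedSegment {f : P → ℝ} {γ : ℝ → P} {L c : ℝ}
    (hγ : IsUnitSpeedSegment γ L) (hL : 0 < L)
    (hc : ∀ t ∈ Ioo 0 L, c * t ≤ |f (γ 0) - f (γ t)|) :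
    ENNReal.ofReal c ≤ lipConst f (γ 0) := by
  set quot : P → ℝ≥0∞ := fun y => ENNReal.ofReal (|f (γ 0) - f y| / dist (γ 0) y)
  have hquot : ∀ᶠ t in 𝓝[>] (0 : ℝ), ENNReal.ofReal c ≤ (quot ∘ γ) t := by
    filter_upwards [Ioo_mem_nhdsGT hL] with t ht
    simp only [quot, Function.comp_apply, hγ.dist_apply_zero (Ioo_subset_Icc_self ht)]
    exact ENNReal.ofReal_le_ofReal ((le_div_iff₀ ht.1).mpr (hc t ht))
  calc ENNReal.ofReal c
      ≤ limsup (quot ∘ γ) (𝓝[>] 0) := le_limsup_of_frequently_le hquot.frequently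
    _ = limsup quot (map γ (𝓝[>] 0)) := limsup_comp quot γ _
    _ ≤ limsup quot (𝓝[≠] (γ 0)) := limsup_le_limsup_of_le (hγ.tendsto_nhdsNE hL)

end UnitSpeedSegment

theorem connectorSlopeBound_general {X : Type*} [MetricSpace X]
    (C : Set (WithLp 2 (X × ℝ)))
    (hsub : C ⊆ {q | 0 < snd2 q})
    (xb : WithLp 2 (X × ℝ)) (hxb : snd2 xb < 0)
    (γ : ℝ → WithLp 2 (X × ℝ)) (L : ℝ) (hL : L = Metric.infDist xb C)
    (hγ0 : γ 0 = xb) (hγL : γ L ∈ C)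
    (hgeo : ∀ s ∈ Set.Icc (0:ℝ) L, ∀ t ∈ Set.Icc (0:ℝ) L, dist (γ s) (γ t) = |s - t|) :
    ENNReal.ofReal (1 - |snd2 xb - snd2 (γ L)| / L)
      ≤ lipConst (fun q => Metric.infDist q C + snd2 q) xb := by
  have hγ : IsUnitSpeedSegment γ L := hgeo
  subst hγ0
  have hL0 : 0 < L := by
    have hLγ : dist (γ 0) (γ L) = L := hγ.dist_apply_zero ⟨hL ▸ infDist_nonneg, le_rfl⟩
    have hsnd := WithLp.dist_snd_le (γ 0) (γ L)
    rw [hLγ, Real.dist_eq] at hsnd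
    have hpos : 0 < (γ L).snd := hsub hγL
    linarith [neg_le_abs ((γ 0).snd - (γ L).snd), show (γ 0).snd < 0 from hxb]
  refine ofReal_le_lipConst_of_isUnitSpeedSegment hγ hL0 fun t ht => ?_
  have hmem : t ∈ Icc 0 L := Ioo_subset_Icc_self ht
  have hd : infDist (γ t) C = L - t := hγ.infDist_eq_sub hL.symm hγL hmem
  have hsnd : |snd2 (γ 0) - snd2 (γ t)| * L = |snd2 (γ 0) - snd2 (γ L)| * t := by
    have := dist_snd_mul_eq_of_dist_add_dist_eq (hγ.dist_add_dist_eq hmem)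
    rwa [hγ.dist_apply_zero hmem, hγ.dist_apply_zero ⟨hL0.le, le_rfl⟩, Real.dist_eq,
      Real.dist_eq] at this
  calc (1 - |snd2 (γ 0) - snd2 (γ L)| / L) * t = t - |snd2 (γ 0) - snd2 (γ t)| := by
        field_simp
        linarith
    _ ≤ |t + (snd2 (γ 0) - snd2 (γ t))| := by
        linarith [neg_abs_le (snd2 (γ 0) - snd2 (γ t)),
          le_abs_self (t + (snd2 (γ 0) - snd2 (γ t)))]
    _ = _ := by rw [← hL, hd]; ring_nf

/-- **Slope of a connector bounds the pointwise Lipschitz constant of `d̄`.** Let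
`(X,d,m)` be a parabolic `RCD(0,N)` space, `C ⊆ X × (0,∞)` nonempty, closed, and
locally the boundary of a locally perimeter minimizing set in `X × ℝ`, and let
`d̄(q) = d_C(q) + snd q` on the lower half-space. Let `xb ∈ X × (-∞,0)` and let
`γ : [0, d_C(xb)] → X × ℝ` be a connector for `xb` (a unit-speed geodesic from `xb`
realizing the distance to `C`). Then `lip d̄ (xb) ≥ s(xb,γ)`, where the slope is
`s(xb,γ) = 1 - |snd xb - snd (γ L)| / L` with `L = d_C(xb)`. -/
theorem connectorSlopeBound {X : Type*} [MetricSpace X] [MeasurableSpace X] [BorelSpace X]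
    [SecondCountableTopology X]
    (μ : Measure X) (N : ℝ) (hRCD : IsRCD 0 N μ)
    (p : ℝ → X → X → ℝ) (hp : IsHeatKernel μ p) (hpar : Parabolic μ p)
    (C : Set (WithLp 2 (X × ℝ))) (hne : C.Nonempty) (hcl : IsClosed C)
    (hsub : C ⊆ {q | 0 < snd2 q})
    (hC : IsLocalMinimizingBoundary (l2prodMeasure μ volume) C)
    (xb : WithLp 2 (X × ℝ)) (hxb : snd2 xb < 0)
    (γ : ℝ → WithLp 2 (X × ℝ)) (L : ℝ) (hL : L = Metric.infDist xb C)
    (hγ0 : γ 0 = xb) (hγL : γ L ∈ C)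
    (hgeo : ∀ s ∈ Set.Icc (0:ℝ) L, ∀ t ∈ Set.Icc (0:ℝ) L, dist (γ s) (γ t) = |s - t|) :
    ENNReal.ofReal (1 - |snd2 xb - snd2 (γ L)| / L)
      ≤ lipConst (fun q => Metric.infDist q C + snd2 q) xb :=
  connectorSlopeBound_general C hsub xb hxb γ L hL hγ0 hγL hgeo

end HalfSpaceRCD
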